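/- arXiv:2210.02611 — 5 statements merged into one kernel-verified Lean document; each statement's English description precedes it below -/
import Mathlib

section
/- For every finite undirected multigraph G = (V, E) with at least one vertex, the minimum over all fractional orientations y of G of the maximum fractional in-degree max_{v ∈ V} ȳ(v) is equal to the maximum subgraph density ρ(G) = max_{∅ ≠ S ⊆ V} |E(S)|/|S|. -/
open Finset

/-- A fractional orientation of a finite undirected multigraph whose edges are
indexed by `E`, where edge `e` joins the two distinct vertices `a e` and `b e`.
`y e v` is the (nonnegative) fraction of edge `e` oriented toward `v`, and for
each edge the two fractions at its endpoints sum to `1`. -/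
structure FracOrient (V E : Type*) (a b : E → V) where
  y : E → V → ℝ
  nonneg : ∀ e v, 0 ≤ y e v
  sum_one : ∀ e, y e (a e) + y e (b e) = 1

/-- The fractional in-degree `ȳ(v)`: the sum, over edges incident to `v`,
of the fraction of the edge oriented toward `v`. -/
noncomputable def inDeg {V E : Type*} [Fintype E] [DecidableEq V]
    (a b : E → V) (y : E → V → ℝ) (v : V) : ℝ :=
  ∑ e ∈ univ.filter (fun e => a e = v ∨ b e = v), y e v

/-- The maximum fractional in-degree `max_{v ∈ V} ȳ(v)`. -/
noncomputable def maxInDeg {V E : Type*} [Fintype E] [DecidableEq V]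
    (a b : E → V) (y : E → V → ℝ) : ℝ :=
  sSup (Set.range (inDeg a b y))

/-- The density `|E(S)|/|S|` of a set `S` of vertices: the number of edges with
both endpoints in `S` (counted with multiplicity), divided by `|S|`. -/
noncomputable def density {V E : Type*} [Fintype E] [DecidableEq V]
    (a b : E → V) (S : Finset V) : ℝ :=
  ((univ.filter fun e => a e ∈ S ∧ b e ∈ S).card : ℝ) / S.card

/-- The maximum subgraph density `ρ(G) = max_{∅ ≠ S ⊆ V} |E(S)|/|S|`. -/
noncomputable def maxDensity {V E : Type*} [Fintype E] [DecidableEq V]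
    (a b : E → V) : ℝ :=
  sSup { d : ℝ | ∃ S : Finset V, S.Nonempty ∧ d = density a b S }

/-- A fractional orientation is locally optimal if it never directs any
fraction of an edge toward an endpoint of strictly larger in-degree. -/
def LocallyOpt {V E : Type*} [Fintype E] [DecidableEq V]
    (a b : E → V) (y : E → V → ℝ) : Prop :=
  ∀ e, (0 < y e (b e) → inDeg a b y (b e) ≤ inDeg a b y (a e)) ∧
       (0 < y e (a e) → inDeg a b y (a e) ≤ inDeg a b y (b e))

/-- `(α, β)`-local optimality: if `y(e,v) > 0` then `ȳ(v) < (1+α)·ȳ(u) + β`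
for the other endpoint `u` of `e`. -/
def ApxLocallyOpt {V E : Type*} [Fintype E] [DecidableEq V]
    (a b : E → V) (y : E → V → ℝ) (α β : ℝ) : Prop :=
  ∀ e, (0 < y e (b e) → inDeg a b y (b e) < (1 + α) * inDeg a b y (a e) + β) ∧
       (0 < y e (a e) → inDeg a b y (a e) < (1 + α) * inDeg a b y (b e) + β)

section helpers

set_option linter.unusedSectionVars false

variable {V E : Type*} [Fintype V] [Fintype E] [DecidableEq V]

lemma inDeg_eq_sum (a b : E → V) (y : E → V → ℝ) (v : V) :
    inDeg a b y v = ∑ e : E, if a e = v ∨ b e = v then y e v else 0 := by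
  rw [inDeg, Finset.sum_filter]

lemma sum_inDeg (a b : E → V) (hab : ∀ e, a e ≠ b e) (y : E → V → ℝ) (S : Finset V) :
    ∑ v ∈ S, inDeg a b y v
      = ∑ e : E, ((if a e ∈ S then y e (a e) else 0) + (if b e ∈ S then y e (b e) else 0)) := by
  simp only [inDeg_eq_sum]
  rw [Finset.sum_comm]
  refine Finset.sum_congr rfl fun e _ => ?_
  have h1 : ∀ v ∈ S, (if a e = v ∨ b e = v then y e v else 0)
      = (if a e = v then y e v else 0) + (if b e = v then y e v else 0) := by
    intro v _
    by_cases h1 : a e = v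
    · have h2 : ¬ b e = v := fun h2 => hab e (h1.trans h2.symm)
      simp [h1, h2]
    · by_cases h2 : b e = v <;> simp [h1, h2]
  rw [Finset.sum_congr rfl h1, Finset.sum_add_distrib,
    Finset.sum_ite_eq S (a e) (fun v => y e v), Finset.sum_ite_eq S (b e) (fun v => y e v)]

lemma card_le_sum_inDeg (a b : E → V) (hab : ∀ e, a e ≠ b e) (y : E → V → ℝ)
    (hnn : ∀ e v, 0 ≤ y e v) (hsum : ∀ e, y e (a e) + y e (b e) = 1) (S : Finset V) :
    ((univ.filter fun e => a e ∈ S ∧ b e ∈ S).card : ℝ) ≤ ∑ v ∈ S, inDeg a b y v := by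
  rw [sum_inDeg a b hab y S]
  have h1 : ((univ.filter fun e => a e ∈ S ∧ b e ∈ S).card : ℝ)
      = ∑ e ∈ univ.filter (fun e => a e ∈ S ∧ b e ∈ S),
          ((if a e ∈ S then y e (a e) else 0) + (if b e ∈ S then y e (b e) else 0)) := by
    rw [Finset.sum_congr rfl (fun e he => ?_), Finset.sum_const, nsmul_eq_mul, mul_one]
    obtain ⟨h1, h2⟩ := (Finset.mem_filter.mp he).2
    rw [if_pos h1, if_pos h2, hsum e]
  rw [h1]
  refine Finset.sum_le_sum_of_subset_of_nonneg (Finset.filter_subset _ _) fun e _ _ => ?_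
  have := hnn e (a e); have := hnn e (b e)
  positivity

lemma bddAbove_inDeg (a b : E → V) (y : E → V → ℝ) :
    BddAbove (Set.range (inDeg a b y)) := (Set.finite_range _).bddAbove

lemma inDeg_le_maxInDeg (a b : E → V) (y : E → V → ℝ) (v : V) :
    inDeg a b y v ≤ maxInDeg a b y :=
  le_csSup (bddAbove_inDeg a b y) (Set.mem_range_self v)

lemma exists_maxInDeg [Nonempty V] (a b : E → V) (y : E → V → ℝ) :
    ∃ v, maxInDeg a b y = inDeg a b y v := by
  obtain ⟨v, -, hv⟩ := Finset.exists_max_image (univ : Finset V) (inDeg a b y) univ_nonempty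
  refine ⟨v, IsGreatest.csSup_eq ⟨Set.mem_range_self v, ?_⟩⟩
  rintro x ⟨u, rfl⟩
  exact hv u (mem_univ u)

lemma density_le_maxInDeg [Nonempty V] (a b : E → V) (hab : ∀ e, a e ≠ b e) (y : E → V → ℝ)
    (hnn : ∀ e v, 0 ≤ y e v) (hsum : ∀ e, y e (a e) + y e (b e) = 1)
    (S : Finset V) (hS : S.Nonempty) :
    density a b S ≤ maxInDeg a b y := by
  have hpos : (0 : ℝ) < S.card := by exact_mod_cast Finset.card_pos.mpr hS
  rw [density, div_le_iff₀ hpos]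
  calc ((univ.filter fun e => a e ∈ S ∧ b e ∈ S).card : ℝ)
      ≤ ∑ v ∈ S, inDeg a b y v := card_le_sum_inDeg a b hab y hnn hsum S
    _ ≤ ∑ _v ∈ S, maxInDeg a b y := Finset.sum_le_sum fun v _ => inDeg_le_maxInDeg a b y v
    _ = maxInDeg a b y * S.card := by rw [Finset.sum_const, nsmul_eq_mul, mul_comm]

/-- A locally optimal orientation attains the maximum density on some set. -/
lemma locallyOpt_exists_dense_set [Nonempty V] (a b : E → V) (hab : ∀ e, a e ≠ b e)
    (y : E → V → ℝ) (hnn : ∀ e v, 0 ≤ y e v) (hsum : ∀ e, y e (a e) + y e (b e) = 1)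
    (hopt : LocallyOpt a b y) :
    ∃ S : Finset V, S.Nonempty ∧ density a b S = maxInDeg a b y := by
  classical
  obtain ⟨v0, hv0⟩ := exists_maxInDeg a b y
  set μ := maxInDeg a b y with hμ
  -- `r v u` : some edge `e` joins `v` and `u` and sends positive fraction toward `v`
  set r : V → V → Prop := fun v u => ∃ e,
    ((a e = v ∧ b e = u) ∧ 0 < y e (a e)) ∨ ((b e = v ∧ a e = u) ∧ 0 < y e (b e)) with hr
  set S : Finset V := univ.filter (fun u => Relation.ReflTransGen r v0 u) with hSdef
  have hv0S : v0 ∈ S := mem_filter.mpr ⟨mem_univ _, Relation.ReflTransGen.refl⟩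
  have hstep : ∀ v u, r v u → inDeg a b y v ≤ inDeg a b y u := by
    rintro v u ⟨e, ⟨⟨hv, hu⟩, hy⟩ | ⟨⟨hv, hu⟩, hy⟩⟩
    · subst hv; subst hu; exact (hopt e).2 hy
    · subst hv; subst hu; exact (hopt e).1 hy
  have hmono : ∀ u, Relation.ReflTransGen r v0 u → inDeg a b y v0 ≤ inDeg a b y u := by
    intro u hchain
    induction hchain with
    | refl => exact le_refl _
    | tail _ h ih => exact ih.trans (hstep _ _ h)
  have hS_deg : ∀ u ∈ S, inDeg a b y u = μ := by
    intro u hu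
    exact le_antisymm (inDeg_le_maxInDeg a b y u) (hv0 ▸ hmono u (mem_filter.mp hu).2)
  have hclosed : ∀ v u, v ∈ S → r v u → u ∈ S := fun v u hv h =>
    mem_filter.mpr ⟨mem_univ _, ((mem_filter.mp hv).2).tail h⟩
  have hbr : ∀ e : E, ((if a e ∈ S then y e (a e) else 0) + (if b e ∈ S then y e (b e) else 0))
      = if a e ∈ S ∧ b e ∈ S then 1 else 0 := by
    intro e
    by_cases h1 : a e ∈ S <;> by_cases h2 : b e ∈ S
    · simp [h1, h2, hsum e]
    · have hz : y e (a e) = 0 := by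
        by_contra h
        have hy : 0 < y e (a e) := lt_of_le_of_ne (hnn e _) (Ne.symm h)
        exact h2 (hclosed _ _ h1 ⟨e, Or.inl ⟨⟨rfl, rfl⟩, hy⟩⟩)
      simp [h1, h2, hz]
    · have hz : y e (b e) = 0 := by
        by_contra h
        have hy : 0 < y e (b e) := lt_of_le_of_ne (hnn e _) (Ne.symm h)
        exact h1 (hclosed _ _ h2 ⟨e, Or.inr ⟨⟨rfl, rfl⟩, hy⟩⟩)
      simp [h1, h2, hz]
    · simp [h1, h2]
  have hkey : μ * S.card = ((univ.filter fun e => a e ∈ S ∧ b e ∈ S).card : ℝ) := by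
    calc μ * S.card = ∑ v ∈ S, inDeg a b y v := by
          rw [Finset.sum_congr rfl hS_deg, Finset.sum_const, nsmul_eq_mul, mul_comm]
      _ = ∑ e : E, ((if a e ∈ S then y e (a e) else 0) + (if b e ∈ S then y e (b e) else 0)) :=
          sum_inDeg a b hab y S
      _ = ∑ e : E, (if a e ∈ S ∧ b e ∈ S then (1 : ℝ) else 0) :=
          Finset.sum_congr rfl fun e _ => hbr e
      _ = ((univ.filter fun e => a e ∈ S ∧ b e ∈ S).card : ℝ) := Finset.sum_boole _ _
  refine ⟨S, ⟨v0, hv0S⟩, ?_⟩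
  have hpos : (S.card : ℝ) ≠ 0 := by
    exact_mod_cast Finset.card_ne_zero_of_mem hv0S
  rw [density, ← hkey, mul_div_assoc, div_self hpos, mul_one]

variable [DecidableEq E]

/-- The orientation determined by a parameter vector `t`. -/
noncomputable def yOf (a b : E → V) (t : E → ℝ) : E → V → ℝ := fun e v =>
  if v = a e then t e else if v = b e then 1 - t e else 0

noncomputable def Phi (a b : E → V) (t : E → ℝ) : ℝ :=
  ∑ v : V, (inDeg a b (yOf a b t) v) ^ 2

lemma continuous_Phi (a b : E → V) : Continuous (Phi a b) := by
  refine continuous_finset_sum _ fun v _ => Continuous.pow ?_ 2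
  unfold inDeg
  refine continuous_finset_sum _ fun e _ => ?_
  unfold yOf
  split_ifs
  · exact continuous_apply e
  · exact continuous_const.sub (continuous_apply e)
  · exact continuous_const

lemma inDeg_yOf_update (a b : E → V) (t : E → ℝ) (e : E) (s : ℝ) (v : V) :
    inDeg a b (yOf a b (Function.update t e s)) v
      = inDeg a b (yOf a b t) v
        + (if v = a e then s - t e else if v = b e then t e - s else 0) := by
  have key : ∀ e' : E, e' ≠ e → yOf a b (Function.update t e s) e' v = yOf a b t e' v := by
    intro e' hne
    unfold yOf
    rw [Function.update_of_ne hne]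
  have hsub := Finset.sum_sub_distrib (s := univ.filter (fun e' => a e' = v ∨ b e' = v))
    (f := fun e' => yOf a b (Function.update t e s) e' v) (g := fun e' => yOf a b t e' v)
  have h : ∑ e' ∈ univ.filter (fun e' => a e' = v ∨ b e' = v),
      (yOf a b (Function.update t e s) e' v - yOf a b t e' v)
      = (if v = a e then s - t e else if v = b e then t e - s else 0) := by
    by_cases hF : a e = v ∨ b e = v
    · rw [Finset.sum_eq_single_of_mem e (Finset.mem_filter.mpr ⟨mem_univ e, hF⟩)]
      · unfold yOf
        rw [Function.update_self]
        split_ifs with h1 h2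
        · ring
        · ring
        · exact absurd hF (by push_neg; exact ⟨fun h => h1 h.symm, fun h => h2 h.symm⟩)
      · intro e' _ hne
        rw [key e' hne, sub_self]
    · push_neg at hF
      rw [if_neg (fun h => hF.1 h.symm), if_neg (fun h => hF.2 h.symm)]
      refine Finset.sum_eq_zero fun e' he' => ?_
      have hne : e' ≠ e := by
        rintro rfl
        exact ((Finset.mem_filter.mp he').2).elim hF.1 hF.2
      rw [key e' hne, sub_self]
  unfold inDeg at *
  linarith [hsub, h]

lemma Phi_update (a b : E → V) (hab : ∀ e, a e ≠ b e) (t : E → ℝ) (e : E) (s : ℝ) :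
    Phi a b (Function.update t e s)
      = Phi a b t
        + ((inDeg a b (yOf a b t) (a e) + (s - t e)) ^ 2 - (inDeg a b (yOf a b t) (a e)) ^ 2)
        + ((inDeg a b (yOf a b t) (b e) + (t e - s)) ^ 2 - (inDeg a b (yOf a b t) (b e)) ^ 2) := by
  have hdiff := Finset.sum_sub_distrib (s := (univ : Finset V))
    (f := fun v => (inDeg a b (yOf a b (Function.update t e s)) v) ^ 2)
    (g := fun v => (inDeg a b (yOf a b t) v) ^ 2)
  have h : ∑ v : V, ((inDeg a b (yOf a b (Function.update t e s)) v) ^ 2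
        - (inDeg a b (yOf a b t) v) ^ 2)
      = ((inDeg a b (yOf a b t) (a e) + (s - t e)) ^ 2 - (inDeg a b (yOf a b t) (a e)) ^ 2)
        + ((inDeg a b (yOf a b t) (b e) + (t e - s)) ^ 2 - (inDeg a b (yOf a b t) (b e)) ^ 2) := by
    have h0 : ∀ v ∈ (univ : Finset V), v ∉ ({a e, b e} : Finset V) →
        (inDeg a b (yOf a b (Function.update t e s)) v) ^ 2
          - (inDeg a b (yOf a b t) v) ^ 2 = 0 := by
      intro v _ hv
      have h1 : v ≠ a e := fun h => hv (by simp [h])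
      have h2 : v ≠ b e := fun h => hv (by simp [h])
      rw [inDeg_yOf_update, if_neg h1, if_neg h2, add_zero, sub_self]
    rw [← Finset.sum_subset (Finset.subset_univ ({a e, b e} : Finset V)) h0,
      Finset.sum_pair (hab e), inDeg_yOf_update, inDeg_yOf_update, if_pos rfl,
      if_neg (Ne.symm (hab e)), if_pos rfl]
  unfold Phi at *
  linarith [hdiff, h]

lemma exists_locallyOpt (a b : E → V) (hab : ∀ e, a e ≠ b e) :
    ∃ t : E → ℝ, t ∈ Set.Icc (0 : E → ℝ) 1 ∧ LocallyOpt a b (yOf a b t) := by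
  obtain ⟨t0, ht0, hmin⟩ := (isCompact_Icc (a := (0 : E → ℝ)) (b := 1)).exists_isMinOn
    ⟨0, Set.left_mem_Icc.mpr zero_le_one⟩ (continuous_Phi a b).continuousOn
  refine ⟨t0, ht0, fun e => ⟨?_, ?_⟩⟩
  · intro hy
    by_contra hlt
    push_neg at hlt
    set da := inDeg a b (yOf a b t0) (a e) with hda
    set db := inDeg a b (yOf a b t0) (b e) with hdb
    have hyb : yOf a b t0 e (b e) = 1 - t0 e := by
      unfold yOf; rw [if_neg (Ne.symm (hab e)), if_pos rfl]
    rw [hyb] at hy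
    set ε := min (1 - t0 e) ((db - da) / 2) with hε
    have hεpos : 0 < ε := lt_min hy (by linarith)
    have hε1 : ε ≤ 1 - t0 e := min_le_left _ _
    have hε2 : ε ≤ (db - da) / 2 := min_le_right _ _
    have ht' : Function.update t0 e (t0 e + ε) ∈ Set.Icc (0 : E → ℝ) 1 := by
      rw [Set.mem_Icc] at ht0 ⊢
      constructor <;> intro i <;> by_cases hi : i = e
      · subst hi; rw [Function.update_self]
        have := ht0.1 i
        simp only [Pi.zero_apply] at this ⊢
        linarith
      · rw [Function.update_of_ne hi]; exact ht0.1 i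
      · subst hi; rw [Function.update_self]
        simp only [Pi.one_apply]
        linarith
      · rw [Function.update_of_ne hi]; exact ht0.2 i
    have hPhi := Phi_update a b hab t0 e (t0 e + ε)
    have hless : Phi a b (Function.update t0 e (t0 e + ε)) < Phi a b t0 := by
      rw [hPhi]
      have h1 : t0 e + ε - t0 e = ε := by ring
      have h2 : t0 e - (t0 e + ε) = -ε := by ring
      rw [h1, h2, ← hda, ← hdb]
      nlinarith [hεpos, hε2, hlt]
    exact absurd (hmin ht') (by simpa using not_le.mpr hless)
  · intro hy
    by_contra hlt
    push_neg at hlt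
    set da := inDeg a b (yOf a b t0) (a e) with hda
    set db := inDeg a b (yOf a b t0) (b e) with hdb
    have hya : yOf a b t0 e (a e) = t0 e := by unfold yOf; rw [if_pos rfl]
    rw [hya] at hy
    set ε := min (t0 e) ((da - db) / 2) with hε
    have hεpos : 0 < ε := lt_min hy (by linarith)
    have hε1 : ε ≤ t0 e := min_le_left _ _
    have hε2 : ε ≤ (da - db) / 2 := min_le_right _ _
    have ht' : Function.update t0 e (t0 e - ε) ∈ Set.Icc (0 : E → ℝ) 1 := by
      rw [Set.mem_Icc] at ht0 ⊢
      constructor <;> intro i <;> by_cases hi : i = e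
      · subst hi; rw [Function.update_self]
        simp only [Pi.zero_apply]
        linarith
      · rw [Function.update_of_ne hi]; exact ht0.1 i
      · subst hi; rw [Function.update_self]
        have := ht0.2 i
        simp only [Pi.one_apply] at this ⊢
        linarith
      · rw [Function.update_of_ne hi]; exact ht0.2 i
    have hPhi := Phi_update a b hab t0 e (t0 e - ε)
    have hless : Phi a b (Function.update t0 e (t0 e - ε)) < Phi a b t0 := by
      rw [hPhi]
      have h1 : t0 e - ε - t0 e = -ε := by ring
      have h2 : t0 e - (t0 e - ε) = ε := by ring
      rw [h1, h2, ← hda, ← hdb]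
      nlinarith [hεpos, hε2, hlt]
    exact absurd (hmin ht') (by simpa using not_le.mpr hless)

/-- The fractional orientation associated to a parameter vector in `[0,1]^E`. -/
noncomputable def orientOf (a b : E → V) (hab : ∀ e, a e ≠ b e) (t : E → ℝ)
    (ht : t ∈ Set.Icc (0 : E → ℝ) 1) : FracOrient V E a b where
  y := yOf a b t
  nonneg := by
    intro e v
    rw [Set.mem_Icc] at ht
    have h0 := ht.1 e
    have h1 := ht.2 e
    simp only [Pi.zero_apply] at h0
    simp only [Pi.one_apply] at h1
    unfold yOf
    split_ifs
    · exact h0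
    · linarith
    · exact le_refl _
  sum_one := by
    intro e
    unfold yOf
    rw [if_pos rfl, if_neg (Ne.symm (hab e)), if_pos rfl]
    ring

end helpers

/-- For every finite undirected multigraph `G = (V, E)` with at
least one vertex, the minimum over all fractional orientations of the maximum
fractional in-degree is equal to (and attained at) the maximum subgraph density
`ρ(G)`. -/
theorem min_maxInDeg_eq_maxDensity {V E : Type*} [Fintype V] [Fintype E]
    [DecidableEq V] [Nonempty V] (a b : E → V) (hab : ∀ e, a e ≠ b e) :
    IsLeast { μ : ℝ | ∃ o : FracOrient V E a b, μ = maxInDeg a b o.y }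
      (maxDensity a b) := by
  classical
  obtain ⟨t, ht, hopt⟩ := exists_locallyOpt a b hab
  set o : FracOrient V E a b := orientOf a b hab t ht with ho
  have hoy : o.y = yOf a b t := rfl
  obtain ⟨S, hSne, hSden⟩ :=
    locallyOpt_exists_dense_set a b hab o.y o.nonneg o.sum_one (hoy ▸ hopt)
  -- maxDensity = maxInDeg o.y
  have hub : ∀ d ∈ { d : ℝ | ∃ S : Finset V, S.Nonempty ∧ d = density a b S },
      d ≤ maxInDeg a b o.y := by
    rintro d ⟨T, hTne, rfl⟩
    exact density_le_maxInDeg a b hab o.y o.nonneg o.sum_one T hTne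
  have hmaxden : maxDensity a b = maxInDeg a b o.y := by
    refine IsGreatest.csSup_eq ⟨⟨S, hSne, hSden.symm⟩, hub⟩
  constructor
  · exact ⟨o, hmaxden⟩
  · rintro μ ⟨o', rfl⟩
    rw [hmaxden, ← hSden]
    exact density_le_maxInDeg a b hab o'.y o'.nonneg o'.sum_one S hSne
end

section
/- For every finite undirected multigraph G = (V, E) with at least one vertex, the supremum of Σ_{e = {u,v} ∈ E} min(x_u, x_v) over all assignments x : V → ℝ_{≥0} with Σ_{v ∈ V} x_v ≤ 1 is equal to the maximum subgraph density ρ(G) = max_{∅ ≠ S ⊆ V} |E(S)|/|S|, and this supremum is attained. -/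
open Finset

section Aux
variable {V E : Type*} [Fintype V] [Fintype E] [DecidableEq V]

lemma densSet_finite (a b : E → V) :
    {d : ℝ | ∃ S : Finset V, S.Nonempty ∧ d = density a b S}.Finite := by
  apply Set.Finite.subset (Set.finite_range (density a b))
  rintro d ⟨S, -, rfl⟩
  exact ⟨S, rfl⟩

lemma density_le_max (a b : E → V) {S : Finset V} (hS : S.Nonempty) :
    density a b S ≤ maxDensity a b :=
  le_csSup (densSet_finite a b).bddAbove ⟨S, hS, rfl⟩

lemma key (a b : E → V) : ∀ n (x : V → ℝ), (∀ v, 0 ≤ x v) →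
    ((univ.image x).erase 0).card ≤ n →
    ∑ e, min (x (a e)) (x (b e)) ≤ maxDensity a b * ∑ v, x v := by
  intro n
  induction n with
  | zero =>
    intro x hx h0
    have hzero : ∀ v, x v = 0 := by
      intro v
      by_contra hv
      have hm : x v ∈ (univ.image x).erase 0 :=
        mem_erase.2 ⟨hv, mem_image_of_mem x (mem_univ v)⟩
      rw [Finset.card_eq_zero.1 (Nat.le_zero.1 h0)] at hm
      exact absurd hm (notMem_empty _)
    simp [hzero]
  | succ n ih =>
    intro x hx h0
    by_cases hall : ∀ v, x v = 0
    · simp [hall]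
    push_neg at hall
    have hne : ((univ.image x).erase 0).Nonempty := by
      obtain ⟨v, hv⟩ := hall
      exact ⟨x v, mem_erase.2 ⟨hv, mem_image_of_mem x (mem_univ v)⟩⟩
    set m := ((univ.image x).erase 0).min' hne with hm
    have hm_mem : m ∈ (univ.image x).erase 0 := min'_mem _ _
    have hm_pos : 0 < m := by
      rcases mem_erase.1 hm_mem with ⟨hm0, hmem⟩
      rcases mem_image.1 hmem with ⟨v, -, hv⟩
      exact lt_of_le_of_ne (hv ▸ hx v) (Ne.symm hm0)
    have hm_le : ∀ v, x v ≠ 0 → m ≤ x v := fun v hv =>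
      min'_le _ _ (mem_erase.2 ⟨hv, mem_image_of_mem x (mem_univ v)⟩)
    set S : Finset V := univ.filter (fun v => x v ≠ 0) with hSdef
    have hSne : S.Nonempty := by
      obtain ⟨v, hv⟩ := hall; exact ⟨v, by simp [hSdef, hv]⟩
    set x' : V → ℝ := fun v => if x v = 0 then 0 else x v - m with hx'def
    have hx'nonneg : ∀ v, 0 ≤ x' v := by
      intro v
      simp only [hx'def]
      split_ifs with h
      · exact le_refl 0
      · exact sub_nonneg.2 (hm_le v h)
    -- decomposition of min
    have hmin : ∀ e, min (x (a e)) (x (b e)) =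
        min (x' (a e)) (x' (b e)) + (if a e ∈ S ∧ b e ∈ S then m else 0) := by
      intro e
      by_cases ha : x (a e) = 0
      · have : min (x (a e)) (x (b e)) = 0 := by
          rw [ha]; exact min_eq_left (hx _)
        rw [this]
        have h2 : x' (a e) = 0 := by simp [hx'def, ha]
        have : min (x' (a e)) (x' (b e)) = 0 := by
          rw [h2]; exact min_eq_left (hx'nonneg _)
        rw [this]
        have : a e ∉ S := by simp [hSdef, ha]
        simp [this]
      · by_cases hb : x (b e) = 0
        · have : min (x (a e)) (x (b e)) = 0 := by
            rw [hb]; exact min_eq_right (hx _)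
          rw [this]
          have h2 : x' (b e) = 0 := by simp [hx'def, hb]
          have : min (x' (a e)) (x' (b e)) = 0 := by
            rw [h2]; exact min_eq_right (hx'nonneg _)
          rw [this]
          have : b e ∉ S := by simp [hSdef, hb]
          simp [this]
        · have haS : a e ∈ S := by simp [hSdef, ha]
          have hbS : b e ∈ S := by simp [hSdef, hb]
          simp only [hx'def, if_neg ha, if_neg hb, if_pos (And.intro haS hbS)]
          rw [min_sub_sub_right]
          ring
    -- decomposition of x
    have hxdec : ∀ v, x v = x' v + (if v ∈ S then m else 0) := by
      intro v
      by_cases h : x v = 0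
      · have : v ∉ S := by simp [hSdef, h]
        simp [hx'def, h, this]
      · have : v ∈ S := by simp [hSdef, h]
        simp [hx'def, h, this]
    have hsumx : ∑ v, x v = (∑ v, x' v) + m * S.card := by
      rw [Finset.sum_congr rfl (fun v _ => hxdec v), Finset.sum_add_distrib]
      congr 1
      rw [Finset.sum_ite_mem, Finset.univ_inter, Finset.sum_const, nsmul_eq_mul, mul_comm]
    -- edge sum
    have hedge : ∑ e, (if a e ∈ S ∧ b e ∈ S then m else 0) =
        m * ((univ.filter fun e => a e ∈ S ∧ b e ∈ S).card : ℝ) := by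
      rw [← Finset.sum_filter, Finset.sum_const, nsmul_eq_mul, mul_comm]
    have hcardE : ((univ.filter fun e => a e ∈ S ∧ b e ∈ S).card : ℝ) =
        density a b S * S.card := by
      rw [density, div_mul_cancel₀]
      exact_mod_cast Finset.card_ne_zero_of_mem (hSne.choose_spec)
    -- induction hypothesis applies to x'
    have hcard' : ((univ.image x').erase 0).card ≤ n := by
      have hsub : (univ.image x').erase 0 ⊆
          (((univ.image x).erase 0).erase m).image (fun t => t - m) := by
        intro d hd
        rcases mem_erase.1 hd with ⟨hd0, hdmem⟩
        rcases mem_image.1 hdmem with ⟨v, -, hv⟩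
        have hxv : x v ≠ 0 := by
          intro h; apply hd0; rw [← hv]; simp [hx'def, h]
        have hv' : d = x v - m := by rw [← hv]; simp [hx'def, hxv]
        have hxm : x v ≠ m := by
          intro h; apply hd0; rw [hv', h, sub_self]
        exact mem_image.2 ⟨x v, mem_erase.2 ⟨hxm,
          mem_erase.2 ⟨hxv, mem_image_of_mem x (mem_univ v)⟩⟩, hv'.symm⟩
      calc ((univ.image x').erase 0).card
          ≤ ((((univ.image x).erase 0).erase m).image (fun t => t - m)).card :=
            Finset.card_le_card hsub
        _ ≤ (((univ.image x).erase 0).erase m).card := Finset.card_image_le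
        _ = ((univ.image x).erase 0).card - 1 := Finset.card_erase_of_mem hm_mem
        _ ≤ n := by omega
    have hih := ih x' hx'nonneg hcard'
    have hrho : density a b S ≤ maxDensity a b := density_le_max a b hSne
    calc ∑ e, min (x (a e)) (x (b e))
        = (∑ e, min (x' (a e)) (x' (b e))) +
            ∑ e, (if a e ∈ S ∧ b e ∈ S then m else 0) := by
          rw [← Finset.sum_add_distrib]
          exact Finset.sum_congr rfl (fun e _ => hmin e)
      _ = (∑ e, min (x' (a e)) (x' (b e))) + m * (density a b S * S.card) := by
          rw [hedge, hcardE]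
      _ ≤ maxDensity a b * (∑ v, x' v) + maxDensity a b * (m * S.card) := by
          apply add_le_add hih
          have hS0 : (0:ℝ) ≤ S.card := Nat.cast_nonneg _
          calc m * (density a b S * S.card) = density a b S * (m * S.card) := by ring
            _ ≤ maxDensity a b * (m * S.card) :=
              mul_le_mul_of_nonneg_right hrho (mul_nonneg hm_pos.le hS0)
      _ = maxDensity a b * ∑ v, x v := by rw [hsumx]; ring

end Aux

/-- The supremum of `Σ_{e={u,v}} min(x_u, x_v)` over all
`x : V → ℝ≥0` with `Σ_v x_v ≤ 1` equals the maximum subgraph density `ρ(G)`,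
and this supremum is attained. -/
theorem lp_value_eq_maxDensity {V E : Type*} [Fintype V] [Fintype E]
    [DecidableEq V] [Nonempty V] (a b : E → V) (hab : ∀ e, a e ≠ b e) :
    IsGreatest { t : ℝ | ∃ x : V → ℝ, (∀ v, 0 ≤ x v) ∧ (∑ v, x v) ≤ 1 ∧
        t = ∑ e, min (x (a e)) (x (b e)) }
      (maxDensity a b) := by
  constructor
  · -- membership: maxDensity is attained
    have hmem : maxDensity a b ∈
        {d : ℝ | ∃ S : Finset V, S.Nonempty ∧ d = density a b S} := by
      apply Set.Nonempty.csSup_mem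
      · exact ⟨density a b univ, univ, univ_nonempty, rfl⟩
      · exact densSet_finite a b
    obtain ⟨S, hSne, hEq⟩ := hmem
    have hScard : (0:ℝ) < S.card := by
      exact_mod_cast Finset.card_pos.2 hSne
    refine ⟨fun v => if v ∈ S then ((S.card : ℝ))⁻¹ else 0, ?_, ?_, ?_⟩
    · intro v; dsimp only; split_ifs
      · exact inv_nonneg.2 hScard.le
      · exact le_refl 0
    · rw [Finset.sum_ite_mem, Finset.univ_inter, Finset.sum_const, nsmul_eq_mul,
        mul_inv_cancel₀ hScard.ne']
    · rw [hEq]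
      have hterm : ∀ e, min ((if a e ∈ S then ((S.card:ℝ))⁻¹ else 0))
          ((if b e ∈ S then ((S.card:ℝ))⁻¹ else 0)) =
          if a e ∈ S ∧ b e ∈ S then ((S.card:ℝ))⁻¹ else 0 := by
        intro e
        have hinv : (0:ℝ) ≤ (S.card:ℝ)⁻¹ := inv_nonneg.2 hScard.le
        by_cases ha : a e ∈ S <;> by_cases hb : b e ∈ S <;>
          simp [ha, hb, min_eq_left, min_eq_right, hinv]
      rw [Finset.sum_congr rfl (fun e _ => hterm e), ← Finset.sum_filter,
        Finset.sum_const, nsmul_eq_mul, density, div_eq_mul_inv]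
  · -- upper bound
    rintro t ⟨x, hx, hsum, rfl⟩
    calc ∑ e, min (x (a e)) (x (b e))
        ≤ maxDensity a b * ∑ v, x v := key a b _ x hx (le_refl _)
      _ ≤ maxDensity a b * 1 := by
          apply mul_le_mul_of_nonneg_left hsum
          have : (0:ℝ) ≤ density a b {Classical.arbitrary V} := by
            apply div_nonneg <;> positivity
          exact le_trans this (density_le_max a b (singleton_nonempty _))
      _ = maxDensity a b := mul_one _
end

section
/- Let G = (V, E) be a finite undirected multigraph with at least one vertex, and let y be a fractional orientation of G that is locally optimal, i.e., for every edge e = {u, v}, y(e, v) > 0 implies ȳ(v) ≤ ȳ(u). Then y minimizes the maximum fractional in-degree: max_{v ∈ V} ȳ(v) = min over all fractional orientations y' of G of max_{v ∈ V} ȳ'(v). -/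
open Finset

lemma sum_inDeg_eq {V E : Type*} [Fintype E] [DecidableEq V]
    (a b : E → V) (hab : ∀ e, a e ≠ b e) (y : E → V → ℝ) (S : Finset V) :
    ∑ v ∈ S, inDeg a b y v =
      ∑ e : E, ((if a e ∈ S then y e (a e) else 0) +
                (if b e ∈ S then y e (b e) else 0)) := by
  have h1 : ∀ v, inDeg a b y v = ∑ e : E, (if a e = v ∨ b e = v then y e v else 0) := by
    intro v; rw [inDeg, Finset.sum_filter]
  simp_rw [h1]
  rw [Finset.sum_comm]
  refine Finset.sum_congr rfl fun e _ => ?_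
  have h2 : ∀ v, (if a e = v ∨ b e = v then y e v else 0) =
      (if a e = v then y e (a e) else 0) + (if b e = v then y e (b e) else 0) := by
    intro v
    by_cases ha : a e = v <;> by_cases hb : b e = v
    · exact absurd (ha.trans hb.symm) (hab e)
    · simp [ha, hb]
    · simp [ha, hb]
    · simp [ha, hb]
  simp_rw [h2, Finset.sum_add_distrib, Finset.sum_ite_eq]

/-- A locally optimal fractional orientation minimizes the
maximum fractional in-degree over all fractional orientations. -/
theorem locallyOpt_is_min {V E : Type*} [Fintype V] [Fintype E]
    [DecidableEq V] [Nonempty V] (a b : E → V) (hab : ∀ e, a e ≠ b e)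
    (o : FracOrient V E a b) (hopt : LocallyOpt a b o.y) :
    IsLeast { μ : ℝ | ∃ o' : FracOrient V E a b, μ = maxInDeg a b o'.y }
      (maxInDeg a b o.y) := by
  constructor
  · exact ⟨o, rfl⟩
  · rintro μ ⟨o', rfl⟩
    set M := maxInDeg a b o.y with hM
    -- M is attained and is an upper bound
    have hfin : (Set.range (inDeg a b o.y)).Finite := Set.finite_range _
    have hne : (Set.range (inDeg a b o.y)).Nonempty := Set.range_nonempty _
    have hbdd : BddAbove (Set.range (inDeg a b o.y)) := hfin.bddAbove
    have hub : ∀ v, inDeg a b o.y v ≤ M := fun v => le_csSup hbdd ⟨v, rfl⟩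
    have hmem : M ∈ Set.range (inDeg a b o.y) := hne.csSup_mem hfin
    -- The set S of max-in-degree vertices
    set S : Finset V := univ.filter (fun v => inDeg a b o.y v = M) with hS
    have hSne : S.Nonempty := by
      obtain ⟨v, hv⟩ := hmem
      exact ⟨v, by simp [hS, hv]⟩
    have hSmem : ∀ v ∈ S, inDeg a b o.y v = M := by
      intro v hv; simpa [hS] using hv
    have hSmem' : ∀ v, inDeg a b o.y v = M → v ∈ S := by
      intro v hv; simp [hS, hv]
    -- sum of in-degrees over S for o equals at most |E(S)|
    have hkey : ∀ e : E, ((if a e ∈ S then o.y e (a e) else 0) +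
        (if b e ∈ S then o.y e (b e) else 0)) ≤
        (if a e ∈ S ∧ b e ∈ S then (1:ℝ) else 0) := by
      intro e
      by_cases hA : a e ∈ S <;> by_cases hB : b e ∈ S
      · simp [hA, hB, (o.sum_one e).le]
      · -- a e ∈ S, b e ∉ S : o.y e (a e) = 0
        have h0 : o.y e (a e) = 0 := by
          by_contra h
          have hpos : 0 < o.y e (a e) := lt_of_le_of_ne (o.nonneg e _) (Ne.symm h)
          have := (hopt e).2 hpos
          have hBe : inDeg a b o.y (b e) = M :=
            le_antisymm (hub _) ((hSmem _ hA ▸ this))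
          exact hB (hSmem' _ hBe)
        simp [hA, hB, h0]
      · have h0 : o.y e (b e) = 0 := by
          by_contra h
          have hpos : 0 < o.y e (b e) := lt_of_le_of_ne (o.nonneg e _) (Ne.symm h)
          have := (hopt e).1 hpos
          have hAe : inDeg a b o.y (a e) = M :=
            le_antisymm (hub _) ((hSmem _ hB ▸ this))
          exact hA (hSmem' _ hAe)
        simp [hA, hB, h0]
      · simp [hA, hB]
    have hcard : (0:ℝ) < S.card := by exact_mod_cast Finset.card_pos.mpr hSne
    have hEq : (M : ℝ) * S.card ≤
        ((univ.filter fun e => a e ∈ S ∧ b e ∈ S).card : ℝ) := by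
      have h1 : ∑ v ∈ S, inDeg a b o.y v = M * S.card := by
        rw [Finset.sum_congr rfl hSmem, Finset.sum_const, nsmul_eq_mul, mul_comm]
      calc M * S.card = ∑ v ∈ S, inDeg a b o.y v := h1.symm
        _ = ∑ e : E, ((if a e ∈ S then o.y e (a e) else 0) +
              (if b e ∈ S then o.y e (b e) else 0)) := sum_inDeg_eq a b hab o.y S
        _ ≤ ∑ e : E, (if a e ∈ S ∧ b e ∈ S then (1:ℝ) else 0) :=
            Finset.sum_le_sum fun e _ => hkey e
        _ = ((univ.filter fun e => a e ∈ S ∧ b e ∈ S).card : ℝ) := by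
            rw [Finset.sum_boole]
    -- For o', sum over S is at least |E(S)|
    have hge : ((univ.filter fun e => a e ∈ S ∧ b e ∈ S).card : ℝ) ≤
        ∑ v ∈ S, inDeg a b o'.y v := by
      rw [sum_inDeg_eq a b hab o'.y S]
      calc ((univ.filter fun e => a e ∈ S ∧ b e ∈ S).card : ℝ)
          = ∑ e : E, (if a e ∈ S ∧ b e ∈ S then (1:ℝ) else 0) := by
            rw [Finset.sum_boole]
        _ ≤ _ := by
            refine Finset.sum_le_sum fun e _ => ?_
            by_cases hA : a e ∈ S <;> by_cases hB : b e ∈ S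
            · simp [hA, hB, (o'.sum_one e).ge]
            · simpa [hA, hB] using o'.nonneg e (a e)
            · simpa [hA, hB] using o'.nonneg e (b e)
            · simp [hA, hB]
    -- bound by max of o'
    have hbdd' : BddAbove (Set.range (inDeg a b o'.y)) := (Set.finite_range _).bddAbove
    have hub' : ∀ v, inDeg a b o'.y v ≤ maxInDeg a b o'.y :=
      fun v => le_csSup hbdd' ⟨v, rfl⟩
    have hsum' : ∑ v ∈ S, inDeg a b o'.y v ≤ maxInDeg a b o'.y * S.card := by
      calc ∑ v ∈ S, inDeg a b o'.y v ≤ ∑ _v ∈ S, maxInDeg a b o'.y :=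
            Finset.sum_le_sum fun v _ => hub' v
        _ = maxInDeg a b o'.y * S.card := by rw [Finset.sum_const, nsmul_eq_mul, mul_comm]
    have : M * S.card ≤ maxInDeg a b o'.y * S.card :=
      hEq.trans (hge.trans hsum')
    exact le_of_mul_le_mul_right this hcard
end

section
/- Let G = (V, E) be a finite undirected multigraph, let y be a fractional orientation of G, let S ⊆ T ⊆ V with S nonempty, and let d ≥ 0 be a real number. Suppose that ȳ(v) ≥ d for every v ∈ S, and that for every edge e = {u, v} with v ∈ S and y(e, v) > 0 the other endpoint u lies in T. Then |E(T)| ≥ d·|S|, and hence ρ(G) ≥ d·|S|/|T|. -/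
open Finset

/-- If every vertex of `S` has fractional in-degree at least
`d ≥ 0` and every edge fractionally directed into `S` has its other endpoint in
`T ⊇ S`, then `|E(T)| ≥ d·|S|`, and hence `ρ(G) ≥ d·|S|/|T|`. -/
theorem edges_in_T_lower_bound {V E : Type*} [Fintype V] [Fintype E]
    [DecidableEq V] (a b : E → V) (hab : ∀ e, a e ≠ b e)
    (o : FracOrient V E a b) (S T : Finset V) (hST : S ⊆ T) (hS : S.Nonempty)
    (d : ℝ) (hd : 0 ≤ d) (hdeg : ∀ v ∈ S, d ≤ inDeg a b o.y v)
    (hclosed : ∀ e, (b e ∈ S → 0 < o.y e (b e) → a e ∈ T) ∧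
                    (a e ∈ S → 0 < o.y e (a e) → b e ∈ T)) :
    d * S.card ≤ ((univ.filter fun e => a e ∈ T ∧ b e ∈ T).card : ℝ) ∧
      d * S.card / T.card ≤ maxDensity a b := by
  have key : d * S.card ≤ ((univ.filter fun e => a e ∈ T ∧ b e ∈ T).card : ℝ) := by
    calc d * S.card = ∑ _v ∈ S, d := by rw [Finset.sum_const, nsmul_eq_mul, mul_comm]
      _ ≤ ∑ v ∈ S, inDeg a b o.y v := Finset.sum_le_sum hdeg
      _ = ∑ e : E, ((if a e ∈ S then o.y e (a e) else 0)
            + (if b e ∈ S then o.y e (b e) else 0)) := by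
          unfold inDeg
          rw [Finset.sum_comm' (s := S) (t := fun v => univ.filter (fun e => a e = v ∨ b e = v))
            (t' := univ) (s' := fun e => S.filter (fun v => a e = v ∨ b e = v))]
          · refine Finset.sum_congr rfl fun e _ => ?_
            have : (S.filter (fun v => a e = v ∨ b e = v))
                = (S.filter (fun v => a e = v)) ∪ (S.filter (fun v => b e = v)) := by
              rw [← Finset.filter_or]
            rw [this, Finset.sum_union]
            · congr 1
              · rw [Finset.sum_filter]
                rw [Finset.sum_ite_eq S (a e) (fun v => o.y e v)]
              · rw [Finset.sum_filter]
                rw [Finset.sum_ite_eq S (b e) (fun v => o.y e v)]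
            · rw [Finset.disjoint_filter]
              rintro v _ h1 h2
              exact hab e (h1.trans h2.symm)
          · intro v e
            simp only [Finset.mem_filter, Finset.mem_univ, true_and, and_comm]
      _ ≤ ∑ e : E, (if a e ∈ T ∧ b e ∈ T then (1:ℝ) else 0) := by
          refine Finset.sum_le_sum fun e _ => ?_
          by_cases hT : a e ∈ T ∧ b e ∈ T
          · rw [if_pos hT]
            have := o.sum_one e
            have ha := o.nonneg e (a e); have hb := o.nonneg e (b e)
            split_ifs <;> linarith
          · rw [if_neg hT]
            have h1 : (if a e ∈ S then o.y e (a e) else 0) ≤ 0 := by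
              split_ifs with h
              · rcases lt_or_eq_of_le (o.nonneg e (a e)) with hpos | heq
                · exact absurd ⟨hST h, (hclosed e).2 h hpos⟩ hT
                · exact le_of_eq heq.symm
              · exact le_refl 0
            have h2 : (if b e ∈ S then o.y e (b e) else 0) ≤ 0 := by
              split_ifs with h
              · rcases lt_or_eq_of_le (o.nonneg e (b e)) with hpos | heq
                · exact absurd ⟨(hclosed e).1 h hpos, hST h⟩ hT
                · exact le_of_eq heq.symm
              · exact le_refl 0
            linarith
      _ = ((univ.filter fun e => a e ∈ T ∧ b e ∈ T).card : ℝ) := by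
          rw [Finset.sum_boole]
  refine ⟨key, ?_⟩
  have hTne : (0:ℝ) < T.card := by
    have := Finset.card_pos.mpr (hS.mono hST)
    exact_mod_cast this
  have hdT : d * S.card / T.card ≤ density a b T := by
    unfold density
    exact div_le_div_of_nonneg_right key hTne.le
  refine hdT.trans (le_csSup ?_ ⟨T, hS.mono hST, rfl⟩)
  refine ⟨(Fintype.card E : ℝ), ?_⟩
  rintro x ⟨U, hU, rfl⟩
  unfold density
  have h1 : ((univ.filter fun e => a e ∈ U ∧ b e ∈ U).card : ℝ) ≤ Fintype.card E := by
    exact_mod_cast Finset.card_filter_le _ _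
  have hU1 : (1:ℝ) ≤ U.card := by exact_mod_cast Finset.card_pos.mpr hU
  calc ((univ.filter fun e => a e ∈ U ∧ b e ∈ U).card : ℝ) / U.card
      ≤ ((univ.filter fun e => a e ∈ U ∧ b e ∈ U).card : ℝ) / 1 :=
        div_le_div_of_nonneg_left (by positivity) one_pos hU1
    _ ≤ Fintype.card E := by simpa using h1
end

section
/- There exist universal constants c, C > 0 such that the following holds. Let G = (V, E) be a finite undirected multigraph on n ≥ 2 vertices, let β > 0 and 0 < α < c / log n, and let y be an (α, β)-locally optimal fractional orientation of G. Then the maximum fractional in-degree μ = max_{v ∈ V} ȳ(v) satisfies μ ≤ e^{C·√(α·log n)} · ( ρ(G) + C·√(log n / α)·β ). -/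
open Finset

/-!
Peel the vertices by in-degree. With `μ` the maximum in-degree, let `S_i` be the set of
vertices of in-degree at least `t_i = μ / (1 + α)^i - i β`. By `(α, β)`-local optimality, an
edge carrying positive weight into `S_i` has both endpoints in `S_{i+1}`, so
`t_i |S_i| ≤ ∑_{v ∈ S_i} ȳ(v) ≤ |E(S_{i+1})| ≤ ρ |S_{i+1}|`. Iterating `k` times gives
`t_k^k ≤ ρ^k n`, i.e. `t_k ≤ ρ n^{1/k}`. Taking `k ≈ √(log n / α)` makes both `(1 + α)^k`
and `n^{1/k}` at most `e^{O(√(α log n))}` while `k β = O(√(log n / α) β)`.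
-/

lemma pow_mul_le_pow_mul_of_forall_mul_le {R : Type*} [CommSemiring R] [PartialOrder R]
    [IsOrderedRing R] {T ρ : R} {c : ℕ → R} {k : ℕ} (hT : 0 ≤ T) (hρ : 0 ≤ ρ)
    (h : ∀ i < k, T * c i ≤ ρ * c (i + 1)) : T ^ k * c 0 ≤ ρ ^ k * c k := by
  induction k with
  | zero => simp
  | succ k ih =>
    calc T ^ (k + 1) * c 0 = T * (T ^ k * c 0) := by ring
      _ ≤ T * (ρ ^ k * c k) := mul_le_mul_of_nonneg_left (ih fun i hi => h i (by omega)) hT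
      _ = ρ ^ k * (T * c k) := by ring
      _ ≤ ρ ^ k * (ρ * c (k + 1)) :=
        mul_le_mul_of_nonneg_left (h k (by omega)) (pow_nonneg hρ k)
      _ = ρ ^ (k + 1) * c (k + 1) := by ring

noncomputable def peelThreshold (μ α β : ℝ) (i : ℕ) : ℝ := μ / (1 + α) ^ i - i * β

section PeelThreshold

variable {μ α β : ℝ}

lemma peelThreshold_zero : peelThreshold μ α β 0 = μ := by simp [peelThreshold]

lemma peelThreshold_succ (hα : 0 ≤ α) (hβ : 0 ≤ β) (i : ℕ) :
    (1 + α) * peelThreshold μ α β (i + 1) + β ≤ peelThreshold μ α β i := by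
  have hpow : (1 + α) * (μ / (1 + α) ^ (i + 1)) = μ / (1 + α) ^ i := by
    rw [pow_succ]; field_simp
  simp only [peelThreshold, mul_sub, hpow]
  push_cast
  nlinarith [mul_nonneg (mul_nonneg hα hβ) (Nat.cast_nonneg (α := ℝ) i)]

lemma peelThreshold_antitone (hμ : 0 ≤ μ) (hα : 0 ≤ α) (hβ : 0 ≤ β) :
    Antitone (peelThreshold μ α β) := by
  refine antitone_nat_of_succ_le fun i => ?_
  have hdiv : μ / (1 + α) ^ (i + 1) ≤ μ / (1 + α) ^ i :=
    div_le_div_of_nonneg_left hμ (by positivity) (pow_le_pow_right₀ (by linarith) i.le_succ)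
  simp only [peelThreshold]
  push_cast
  nlinarith

end PeelThreshold

section Orientation

variable {V E : Type*} [DecidableEq V] {a b : E → V}

lemma sum_incident_le_one (o : FracOrient V E a b) {e : E} (he : a e ≠ b e) (S : Finset V) :
    ∑ v ∈ S with a e = v ∨ b e = v, o.y e v ≤ 1 := by
  calc ∑ v ∈ S with a e = v ∨ b e = v, o.y e v ≤ ∑ v ∈ {a e, b e}, o.y e v := by
        refine sum_le_sum_of_subset_of_nonneg (fun v hv => ?_) fun v _ _ => o.nonneg e v
        rcases (mem_filter.1 hv).2 with rfl | rfl <;> simp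
    _ = 1 := by rw [sum_pair he, o.sum_one]

variable [Fintype E]

lemma inDeg_nonneg (o : FracOrient V E a b) (v : V) : 0 ≤ inDeg a b o.y v :=
  sum_nonneg fun e _ => o.nonneg e v

lemma sum_inDeg_eq_sum_edges (y : E → V → ℝ) (S : Finset V) :
    ∑ v ∈ S, inDeg a b y v = ∑ e, ∑ v ∈ S with a e = v ∨ b e = v, y e v := by
  simp only [inDeg, sum_filter]
  exact sum_comm

lemma maxDensity_nonneg : 0 ≤ maxDensity a b :=
  Real.sSup_nonneg <| by rintro _ ⟨S, -, rfl⟩; exact div_nonneg (by positivity) (by positivity)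

variable [Fintype V]

noncomputable def superlevel (a b : E → V) (y : E → V → ℝ) (r : ℝ) : Finset V :=
  {v | r ≤ inDeg a b y v}

lemma endpoints_mem_superlevel_of_pos {y : E → V → ℝ} {α β r r' : ℝ}
    (hopt : ApxLocallyOpt a b y α β) (hα : 0 < 1 + α) (hr : (1 + α) * r' + β ≤ r)
    (hr' : r' ≤ r) {e : E} {v : V} (hv : v ∈ superlevel a b y r) (hinc : a e = v ∨ b e = v)
    (hy : 0 < y e v) : a e ∈ superlevel a b y r' ∧ b e ∈ superlevel a b y r' := by
  simp only [superlevel, mem_filter, mem_univ, true_and] at hv ⊢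
  rcases hinc with rfl | rfl
  · have := (hopt e).2 hy
    exact ⟨hr'.trans hv, le_of_mul_le_mul_left (by linarith) hα⟩
  · have := (hopt e).1 hy
    exact ⟨le_of_mul_le_mul_left (by linarith) hα, hr'.trans hv⟩

lemma sum_inDeg_superlevel_le_card_edges (o : FracOrient V E a b) (hab : ∀ e, a e ≠ b e)
    {α β r r' : ℝ} (hopt : ApxLocallyOpt a b o.y α β) (hα : 0 < 1 + α)
    (hr : (1 + α) * r' + β ≤ r) (hr' : r' ≤ r) :
    ∑ v ∈ superlevel a b o.y r, inDeg a b o.y v ≤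
      #{e | a e ∈ superlevel a b o.y r' ∧ b e ∈ superlevel a b o.y r'} := by
  rw [sum_inDeg_eq_sum_edges, natCast_card_filter]
  gcongr with e
  split_ifs with hin
  · exact sum_incident_le_one o (hab e) _
  · refine sum_nonpos fun v hv => not_lt.1 fun hy => hin ?_
    exact endpoints_mem_superlevel_of_pos hopt hα hr hr' (mem_filter.1 hv).1 (mem_filter.1 hv).2 hy

lemma density_le_maxDensity {S : Finset V} (hS : S.Nonempty) :
    density a b S ≤ maxDensity a b := by
  refine le_csSup ((Set.finite_range (density a b)).subset ?_).bddAbove ⟨S, hS, rfl⟩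
  rintro _ ⟨T, -, rfl⟩
  exact ⟨T, rfl⟩

lemma card_edges_le_maxDensity_mul_card {S : Finset V} (hS : S.Nonempty) :
    (#{e | a e ∈ S ∧ b e ∈ S} : ℝ) ≤ maxDensity a b * #S := by
  have := density_le_maxDensity (a := a) (b := b) hS
  rwa [density, div_le_iff₀ (by exact_mod_cast hS.card_pos)] at this

lemma exists_inDeg_eq_maxInDeg [Nonempty V] (y : E → V → ℝ) :
    ∃ v, inDeg a b y v = maxInDeg a b y :=
  exists_eq_ciSup_of_finite

theorem peelThreshold_pow_le [Nonempty V] (o : FracOrient V E a b) (hab : ∀ e, a e ≠ b e)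
    {α β : ℝ} (hopt : ApxLocallyOpt a b o.y α β) (hα : 0 ≤ α) (hβ : 0 ≤ β) {k : ℕ}
    (hT : 0 ≤ peelThreshold (maxInDeg a b o.y) α β k) :
    peelThreshold (maxInDeg a b o.y) α β k ^ k ≤ maxDensity a b ^ k * Fintype.card V := by
  set t := peelThreshold (maxInDeg a b o.y) α β
  set S := fun i => superlevel a b o.y (t i)
  obtain ⟨v₀, hv₀⟩ := exists_inDeg_eq_maxInDeg (a := a) (b := b) o.y
  have ht : Antitone t := peelThreshold_antitone (hv₀ ▸ inDeg_nonneg o v₀) hα hβ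
  have hS : ∀ i, (S i).Nonempty := fun i => ⟨v₀, by
    simpa [S, superlevel, hv₀] using (ht (Nat.zero_le i)).trans_eq peelThreshold_zero⟩
  have hstep : ∀ i < k, t k * #(S i) ≤ maxDensity a b * #(S (i + 1)) := fun i hi =>
    calc t k * #(S i) ≤ t i * #(S i) := by gcongr; exact ht hi.le
      _ ≤ ∑ v ∈ S i, inDeg a b o.y v := by
        simpa [mul_comm] using card_nsmul_le_sum (S i) _ (t i) fun v hv => (mem_filter.1 hv).2
      _ ≤ #{e | a e ∈ S (i + 1) ∧ b e ∈ S (i + 1)} :=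
        sum_inDeg_superlevel_le_card_edges o hab hopt (by linarith)
          (peelThreshold_succ hα hβ i) (ht i.le_succ)
      _ ≤ maxDensity a b * #(S (i + 1)) := card_edges_le_maxDensity_mul_card (hS _)
  calc t k ^ k ≤ t k ^ k * #(S 0) :=
        le_mul_of_one_le_right (pow_nonneg hT k) (by exact_mod_cast (hS 0).card_pos)
    _ ≤ maxDensity a b ^ k * #(S k) :=
        pow_mul_le_pow_mul_of_forall_mul_le hT maxDensity_nonneg hstep
    _ ≤ maxDensity a b ^ k * Fintype.card V := by
        gcongr
        · exact pow_nonneg maxDensity_nonneg k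
        · exact_mod_cast card_le_univ _

theorem maxInDeg_le_of_card_le_pow [Nonempty V] (o : FracOrient V E a b) (hab : ∀ e, a e ≠ b e)
    {α β : ℝ} (hopt : ApxLocallyOpt a b o.y α β) (hα : 0 ≤ α) (hβ : 0 ≤ β) {k : ℕ}
    (hk : k ≠ 0) {s : ℝ} (hs : 0 ≤ s) (hn : (Fintype.card V : ℝ) ≤ s ^ k) :
    maxInDeg a b o.y ≤ (1 + α) ^ k * (s * maxDensity a b + k * β) := by
  set T := peelThreshold (maxInDeg a b o.y) α β k with hT_def
  have hρ : 0 ≤ maxDensity a b := maxDensity_nonneg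
  have hT : T ≤ s * maxDensity a b := by
    rcases le_total T 0 with hT0 | hT0
    · exact hT0.trans (mul_nonneg hs hρ)
    refine (pow_le_pow_iff_left₀ hT0 (mul_nonneg hs hρ) hk).1 ?_
    calc T ^ k ≤ maxDensity a b ^ k * Fintype.card V :=
          peelThreshold_pow_le o hab hopt hα hβ hT0
      _ ≤ maxDensity a b ^ k * s ^ k := by gcongr
      _ = (s * maxDensity a b) ^ k := by ring
  rw [hT_def, peelThreshold, sub_le_iff_le_add, div_le_iff₀ (by positivity)] at hT
  linarith

end Orientation

lemma sqrt_mul_mul_sqrt_div {α L : ℝ} (hα : 0 < α) (hL : 0 ≤ L) :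
    √(α * L) * √(L / α) = L := by
  rw [← Real.sqrt_mul (by positivity), show α * L * (L / α) = L * L by field_simp]
  exact Real.sqrt_mul_self hL

lemma mul_sqrt_div {α L : ℝ} (hα : 0 ≤ α) : α * √(L / α) = √(α * L) := by
  rw [← Real.sqrt_sq hα, ← Real.sqrt_mul (sq_nonneg α), Real.sqrt_sq hα]
  rcases hα.eq_or_lt with rfl | hα
  · simp
  · rw [sq, mul_assoc, mul_div_cancel₀ _ hα.ne']

theorem maxInDeg_le_exp_sqrt {V E : Type*} [Fintype V] [Fintype E] [DecidableEq V] [Nonempty V]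
    {a b : E → V} (o : FracOrient V E a b) (hab : ∀ e, a e ≠ b e) {α β : ℝ}
    (hopt : ApxLocallyOpt a b o.y α β) (hα : 0 < α) (hβ : 0 ≤ β)
    (hαL : α ≤ 4 * Real.log (Fintype.card V)) :
    maxInDeg a b o.y ≤ Real.exp (3 * √(α * Real.log (Fintype.card V))) *
      (maxDensity a b + 3 * √(Real.log (Fintype.card V) / α) * β) := by
  set L := Real.log (Fintype.card V)
  set A := √(α * L)
  set x := √(L / α)
  set k := ⌈x⌉₊
  have hx : 2⁻¹ ≤ x := by
    rw [Real.le_sqrt (by norm_num) (by positivity), le_div_iff₀ hα]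
    linarith
  have hk : (k : ℝ) ≤ 2 * x := Nat.ceil_le_two_mul hx
  have hAx : A * x = L := sqrt_mul_mul_sqrt_div hα (by linarith)
  have hαx : α * x = A := mul_sqrt_div hα.le
  have hpow : (1 + α) ^ k ≤ Real.exp (2 * A) :=
    calc (1 + α) ^ k ≤ Real.exp α ^ k := by gcongr; linarith [Real.add_one_le_exp α]
      _ = Real.exp (k * α) := (Real.exp_nat_mul α k).symm
      _ ≤ Real.exp (2 * A) := Real.exp_le_exp.2 (by nlinarith)
  have hcard : (Fintype.card V : ℝ) ≤ Real.exp A ^ k := by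
    rw [← Real.exp_log (show (0 : ℝ) < Fintype.card V by positivity), ← Real.exp_nat_mul]
    gcongr
    nlinarith [Nat.le_ceil x, Real.sqrt_nonneg (α * L)]
  have hexpA : 1 ≤ Real.exp A := Real.one_le_exp (Real.sqrt_nonneg _)
  calc maxInDeg a b o.y ≤ (1 + α) ^ k * (Real.exp A * maxDensity a b + k * β) :=
        maxInDeg_le_of_card_le_pow o hab hopt hα.le hβ (Nat.ceil_pos.2 (by linarith)).ne'
          (Real.exp_nonneg A) hcard
    _ ≤ Real.exp (2 * A) * (Real.exp A * maxDensity a b + Real.exp A * (3 * x * β)) := by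
        gcongr ?_ * (_ + ?_)
        · exact add_nonneg (mul_nonneg (Real.exp_nonneg A) maxDensity_nonneg) (by positivity)
        · nlinarith [mul_le_mul_of_nonneg_right hexpA (by positivity : 0 ≤ 3 * x * β)]
    _ = Real.exp (3 * A) * (maxDensity a b + 3 * x * β) := by
        rw [show 3 * A = 2 * A + A by ring, Real.exp_add]; ring

/-- There exist universal constants `c, C > 0` such that for
every finite multigraph on `n ≥ 2` vertices, every `β > 0` and
`0 < α < c / log n`, and every `(α, β)`-locally optimal fractional orientation,
the maximum fractional in-degree `μ` satisfies
`μ ≤ e^{C·√(α·log n)} · (ρ(G) + C·√(log n / α)·β)`. -/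
theorem apxLocal_implies_global : ∃ c C : ℝ, 0 < c ∧ 0 < C ∧
    ∀ (V E : Type) [Fintype V] [Fintype E] [DecidableEq V],
    ∀ a b : E → V, (∀ e, a e ≠ b e) → 2 ≤ Fintype.card V →
    ∀ β : ℝ, 0 < β →
    ∀ α : ℝ, 0 < α → α < c / Real.log (Fintype.card V) →
    ∀ o : FracOrient V E a b, ApxLocallyOpt a b o.y α β →
      maxInDeg a b o.y ≤
        Real.exp (C * Real.sqrt (α * Real.log (Fintype.card V))) *
          (maxDensity a b +
            C * Real.sqrt (Real.log (Fintype.card V) / α) * β) := by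
  refine ⟨1, 3, one_pos, three_pos, ?_⟩
  intro V E _ _ _ a b hab hn β hβ α hα hαc o hopt
  have : Nonempty V := Fintype.card_pos_iff.1 (by omega)
  have hL : 1 / 2 < Real.log (Fintype.card V) := by
    have := Real.log_le_log two_pos (show (2 : ℝ) ≤ Fintype.card V by exact_mod_cast hn)
    linarith [Real.log_two_gt_d9]
  rw [lt_div_iff₀ (by linarith)] at hαc
  exact maxInDeg_le_exp_sqrt o hab hopt hα hβ.le (by nlinarith)
end
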